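/- For a binary-input discrete memoryless channel W with finite output alphabet satisfying W(y|0)+W(y|1) > 0 for every y, one has 1 - I(W) ≥ φ(Z(W)), where φ(u) = H((1-√(1-u²))/2). -/

import Mathlib

open Real

noncomputable def binEnt (q : ℝ) : ℝ := -(q * Real.logb 2 q) - (1 - q) * Real.logb 2 (1 - q)

noncomputable def Bh (q : ℝ) : ℝ := 2 * Real.sqrt (q * (1 - q))

noncomputable def phi (u : ℝ) : ℝ := binEnt ((1 - Real.sqrt (1 - u ^ 2)) / 2)
variable {Y : Type*} [Fintype Y]

noncomputable def symCap (W : Fin 2 → Y → ℝ) : ℝ :=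
  ∑ y, ∑ x : Fin 2,
    (1/2) * W x y * Real.logb 2 (W x y / ((1/2) * W 0 y + (1/2) * W 1 y))

noncomputable def bhat (W : Fin 2 → Y → ℝ) : ℝ := ∑ y, Real.sqrt (W 0 y * W 1 y)

/-!
With output weights `P y = (W 0 y + W 1 y) / 2` and posteriors `p y = W 0 y / (2 P y)`, one has
`1 - I(W) = ∑ P y · H(p y)` and `Z(W) = ∑ P y · Bh (p y)`, while `φ (Bh q) = H q`. So the
inequality is Jensen's inequality for `φ`, which is convex on `[0, 1]`: with `g = √(1 - u²)`,
`φ''(u)` is a positive multiple of `artanh g - g ≥ 0`.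
-/

lemma two_mul_le_log_one_add_sub_log_one_sub {x : ℝ} (h0 : 0 ≤ x) (h1 : x < 1) :
    2 * x ≤ log (1 + x) - log (1 - x) := by
  have hs := hasSum_log_sub_log_of_abs_lt_one (abs_lt.2 ⟨by linarith, h1⟩)
  simpa using le_hasSum hs 0 fun k _ => by positivity

lemma binEnt_eq_binEntropy_div (q : ℝ) : binEnt q = binEntropy q / log 2 := by
  simp only [binEnt, binEntropy, logb, log_inv]
  ring

section Convexity

variable {u : ℝ}

lemma sqrt_one_sub_sq_mem_Ioo (h0 : 0 < u) (h1 : u < 1) : √(1 - u ^ 2) ∈ Set.Ioo 0 1 :=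
  ⟨sqrt_pos.2 (by nlinarith), (sqrt_lt' one_pos).2 (by nlinarith)⟩

lemma hasDerivAt_sqrt_one_sub_sq (h0 : 0 < u) (h1 : u < 1) :
    HasDerivAt (fun x => √(1 - x ^ 2)) (-u / √(1 - u ^ 2)) u := by
  have h := ((hasDerivAt_pow 2 u).const_sub 1).sqrt (by nlinarith)
  convert h using 1
  simp only [Nat.cast_ofNat, Nat.add_one_sub_one, pow_one]
  field_simp

noncomputable def natPhi (u : ℝ) : ℝ := binEntropy ((1 - √(1 - u ^ 2)) / 2)

noncomputable def natPhiDeriv (u : ℝ) : ℝ :=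
  u * (log (1 + √(1 - u ^ 2)) - log (1 - √(1 - u ^ 2))) / (2 * √(1 - u ^ 2))

lemma hasDerivAt_natPhi (h0 : 0 < u) (h1 : u < 1) : HasDerivAt natPhi (natPhiDeriv u) u := by
  obtain ⟨hg0, hg1⟩ := sqrt_one_sub_sq_mem_Ioo h0 h1
  have hq := ((hasDerivAt_sqrt_one_sub_sq h0 h1).const_sub 1).div_const 2
  have h := (hasDerivAt_binEntropy (p := (1 - √(1 - u ^ 2)) / 2) (by linarith)
    (by linarith)).comp u hq
  refine h.congr_deriv ?_
  rw [natPhiDeriv]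
  set g := √(1 - u ^ 2)
  rw [show 1 - (1 - g) / 2 = (1 + g) / 2 by ring, log_div (by linarith) two_ne_zero,
    log_div (by linarith) two_ne_zero]
  field_simp
  ring

lemma hasDerivAt_natPhiDeriv (h0 : 0 < u) (h1 : u < 1) :
    HasDerivAt natPhiDeriv
      ((log (1 + √(1 - u ^ 2)) - log (1 - √(1 - u ^ 2)) - 2 * √(1 - u ^ 2)) /
        (2 * √(1 - u ^ 2) ^ 3)) u := by
  obtain ⟨hg0, hg1⟩ := sqrt_one_sub_sq_mem_Ioo h0 h1
  have hsq : √(1 - u ^ 2) ^ 2 = 1 - u ^ 2 := sq_sqrt (by nlinarith)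
  have hg := hasDerivAt_sqrt_one_sub_sq h0 h1
  have hA := ((hg.const_add 1).log (by linarith)).sub ((hg.const_sub 1).log (by linarith))
  have h := ((hasDerivAt_id' u).mul hA).div (hg.const_mul 2) (by positivity)
  refine h.congr_deriv ?_
  simp only [Pi.mul_apply, Pi.sub_apply]
  set g := √(1 - u ^ 2)
  have : 1 - g ≠ 0 := by linarith
  field_simp
  linear_combination ((1 - g ^ 2) * (log (1 + g) - log (1 - g)) - 2 * g) * hsq

lemma convexOn_natPhi : ConvexOn ℝ (Set.Icc 0 1) natPhi := by
  have hI (u : ℝ) (hu : u ∈ interior (Set.Icc (0 : ℝ) 1)) : 0 < u ∧ u < 1 := by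
    rwa [interior_Icc] at hu
  refine convexOn_of_hasDerivWithinAt2_nonneg (convex_Icc 0 1) (by unfold natPhi; fun_prop)
    (fun u hu => (hasDerivAt_natPhi (hI u hu).1 (hI u hu).2).hasDerivWithinAt)
    (fun u hu => (hasDerivAt_natPhiDeriv (hI u hu).1 (hI u hu).2).hasDerivWithinAt)
    fun u hu => ?_
  obtain ⟨hu0, hu1⟩ := hI u hu
  obtain ⟨hg0, hg1⟩ := sqrt_one_sub_sq_mem_Ioo hu0 hu1
  have := two_mul_le_log_one_add_sub_log_one_sub hg0.le hg1
  exact div_nonneg (by linarith) (by positivity)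

end Convexity

lemma convexOn_phi : ConvexOn ℝ (Set.Icc 0 1) phi := by
  have h : phi = fun u => (log 2)⁻¹ • natPhi u := by
    funext u
    rw [phi, natPhi, binEnt_eq_binEntropy_div, smul_eq_mul, inv_mul_eq_div]
  rw [h]
  exact convexOn_natPhi.smul (by positivity)

lemma binEnt_one_sub (q : ℝ) : binEnt (1 - q) = binEnt q := by
  rw [binEnt_eq_binEntropy_div, binEnt_eq_binEntropy_div, binEntropy_one_sub]

lemma phi_Bh {q : ℝ} (h0 : 0 ≤ q) (h1 : q ≤ 1) : phi (Bh q) = binEnt q := by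
  have hsq : 1 - Bh q ^ 2 = (1 - 2 * q) ^ 2 := by
    rw [Bh, mul_pow, sq_sqrt (by nlinarith)]
    ring
  rw [phi, hsq, sqrt_sq_eq_abs]
  rcases le_total q (1 / 2) with h | h
  · rw [abs_of_nonneg (by linarith), show (1 - (1 - 2 * q)) / 2 = q by ring]
  · rw [abs_of_nonpos (by linarith), show (1 - -(1 - 2 * q)) / 2 = 1 - q by ring, binEnt_one_sub]

lemma Bh_mem_Icc (q : ℝ) : Bh q ∈ Set.Icc 0 1 := by
  refine ⟨by unfold Bh; positivity, ?_⟩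
  rw [Bh, ← le_div_iff₀' two_pos, sqrt_le_left (by norm_num)]
  nlinarith [sq_nonneg (q - 1 / 2)]

lemma phi_sum_mul_Bh_le {ι : Type*} (s : Finset ι) (w p : ι → ℝ) (hw : ∀ i ∈ s, 0 ≤ w i)
    (hw₁ : ∑ i ∈ s, w i = 1) (hp : ∀ i ∈ s, p i ∈ Set.Icc 0 1) :
    phi (∑ i ∈ s, w i * Bh (p i)) ≤ ∑ i ∈ s, w i * binEnt (p i) := by
  calc phi (∑ i ∈ s, w i * Bh (p i)) ≤ ∑ i ∈ s, w i * phi (Bh (p i)) :=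
        convexOn_phi.map_sum_le hw hw₁ fun i _ => Bh_mem_Icc (p i)
    _ = ∑ i ∈ s, w i * binEnt (p i) :=
        Finset.sum_congr rfl fun i hi => by rw [phi_Bh (hp i hi).1 (hp i hi).2]

lemma mul_logb_div_half (t : ℝ) {s : ℝ} (hs : s ≠ 0) :
    t * logb 2 (t / (s / 2)) = t * (logb 2 (t / s) + 1) := by
  rcases eq_or_ne t 0 with rfl | ht
  · simp
  rw [show t / (s / 2) = 2 * (t / s) by field_simp, logb_mul two_ne_zero (div_ne_zero ht hs),
    logb_self_eq_one one_lt_two, add_comm]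

lemma sum_half_mul_logb_div_mean {a b : ℝ} (hab : a + b ≠ 0) :
    1 / 2 * a * logb 2 (a / (1 / 2 * a + 1 / 2 * b)) +
        1 / 2 * b * logb 2 (b / (1 / 2 * a + 1 / 2 * b)) =
      (a + b) / 2 * (1 - binEnt (a / (a + b))) := by
  have hmean : 1 / 2 * a + 1 / 2 * b = (a + b) / 2 := by ring
  have hcompl : 1 - a / (a + b) = b / (a + b) := by field_simp; ring
  rw [hmean, mul_assoc, mul_assoc, mul_logb_div_half a hab, mul_logb_div_half b hab,
    binEnt, hcompl]
  field_simp
  ring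

lemma sqrt_mul_eq_mean_mul_Bh {a b : ℝ} (hab : 0 < a + b) :
    √(a * b) = (a + b) / 2 * Bh (a / (a + b)) := by
  have hcompl : 1 - a / (a + b) = b / (a + b) := by field_simp; ring
  rw [Bh, hcompl, div_mul_div_comm, ← sq, sqrt_div' _ (sq_nonneg _), sqrt_sq hab.le]
  field_simp

theorem one_sub_I_ge_phi_Z (W : Fin 2 → Y → ℝ)
    (hnn : ∀ x y, 0 ≤ W x y) (hsum : ∀ x, ∑ y, W x y = 1)
    (hpos : ∀ y, 0 < W 0 y + W 1 y) :
    phi (bhat W) ≤ 1 - symCap W := by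
  set P : Y → ℝ := fun y => (W 0 y + W 1 y) / 2
  set p : Y → ℝ := fun y => W 0 y / (W 0 y + W 1 y)
  have hP : ∑ y, P y = 1 := by
    simp only [P, ← Finset.sum_div, Finset.sum_add_distrib, hsum]
    norm_num
  have hp : ∀ y, p y ∈ Set.Icc 0 1 := fun y =>
    ⟨div_nonneg (hnn 0 y) (hpos y).le, (div_le_one (hpos y)).2 (by linarith [hnn 1 y])⟩
  have hcap : 1 - symCap W = ∑ y, P y * binEnt (p y) := by
    simp only [symCap, Fin.sum_univ_two, sum_half_mul_logb_div_mean (hpos _).ne', mul_one_sub,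
      Finset.sum_sub_distrib]
    rw [hP]
    ring
  have hZ : bhat W = ∑ y, P y * Bh (p y) :=
    Finset.sum_congr rfl fun y _ => sqrt_mul_eq_mean_mul_Bh (hpos y)
  rw [hcap, hZ]
  exact phi_sum_mul_Bh_le _ P p (fun y _ => (half_pos (hpos y)).le) hP fun y _ => hp y
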